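/- Let k satisfy 1 ≤ k < ⌊n/2⌋, let ψ : {1,…,n} → ℂ and let P be the homogeneous operator of degree k associated to ψ. Suppose P is a Rota–Baxter operator of weight 1, i.e. P(x)·P(y) = P(x·P(y) + P(x)·y + x·y) for all x, y ∈ A. Then ψ(i) = 0 for all 1 ≤ i ≤ n, that is, P = 0. -/
import Mathlib


open Finset

/-- Coordinate space of the `n`-dimensional complex null-filiform associative algebra,
with respect to the basis `e_1, …, e_n` (coordinate `m : Fin n` corresponds to `e_{m+1}`). -/
abbrev NF (n : ℕ) : Type := Fin n → ℂ

/-- Multiplication of the null-filiform algebra: `e_i · e_j = e_{i+j}` if `i + j ≤ n`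
and `e_i · e_j = 0` if `i + j > n`, extended bilinearly. -/
noncomputable def nfMul {n : ℕ} (x y : NF n) : NF n :=
  fun m => ∑ i : Fin n, ∑ j : Fin n,
    if (i : ℕ) + (j : ℕ) + 1 = (m : ℕ) then x i * y j else 0

/-- The basis element `e_k`, for `1 ≤ k ≤ n` (it is `0` if `k = 0` or `k > n`). -/
noncomputable def nfE (n k : ℕ) : NF n := fun m => if (m : ℕ) + 1 = k then 1 else 0

/-- The `k`-th power (for `k ≥ 1`) of an element of the null-filiform algebra. -/
noncomputable def nfPow {n : ℕ} (x : NF n) : ℕ → NF n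
  | 0 => 0
  | 1 => x
  | k + 2 => nfMul (nfPow x (k + 1)) x

/- ### Auxiliary lemmas -/

/-- The cyclic degree shift `σ(m)`. -/
def nfSigma (n k m : ℕ) : ℕ := if m + k ≤ n then m + k else m + k - n

/-- Extension of `ψ` by zero outside `[1, n]`. -/
noncomputable def psiExt (n : ℕ) (ψ : ℕ → ℂ) (m : ℕ) : ℂ := if m ≤ n then ψ m else 0

lemma nfE_of_gt {n i : ℕ} (h : n < i) : nfE n i = 0 := by
  funext m
  have := m.isLt
  simp only [nfE, Pi.zero_apply]
  rw [if_neg (by omega)]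

lemma nfMul_smul_left {n : ℕ} (c : ℂ) (x y : NF n) : nfMul (c • x) y = c • nfMul x y := by
  funext m
  simp only [nfMul, Pi.smul_apply, smul_eq_mul, Finset.mul_sum, mul_ite, mul_zero, mul_assoc]

lemma nfMul_smul_right {n : ℕ} (c : ℂ) (x y : NF n) : nfMul x (c • y) = c • nfMul x y := by
  funext m
  simp only [nfMul, Pi.smul_apply, smul_eq_mul, Finset.mul_sum, mul_ite, mul_zero,
    mul_left_comm]

lemma nfMul_e {n : ℕ} (a b : ℕ) (ha1 : 1 ≤ a) (ha : a ≤ n) (hb1 : 1 ≤ b) (hb : b ≤ n) :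
    nfMul (nfE n a) (nfE n b) = nfE n (a + b) := by
  funext m
  simp only [nfMul, nfE]
  rw [Finset.sum_eq_single (⟨a - 1, by omega⟩ : Fin n)]
  · rw [Finset.sum_eq_single (⟨b - 1, by omega⟩ : Fin n)]
    · simp only [Fin.val_mk]
      by_cases h : (m : ℕ) + 1 = a + b
      · rw [if_pos (by omega), if_pos (by omega), if_pos (by omega), one_mul, if_pos h]
      · rw [if_neg (by omega), if_neg (by omega)]
    · intro j _ hj
      have hj' : (j : ℕ) ≠ b - 1 := fun h => hj (Fin.ext h)
      rw [if_neg (show ¬((j : ℕ) + 1 = b) by omega), mul_zero, ite_self]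
    · intro h; exact absurd (Finset.mem_univ _) h
  · intro i _ hi
    have hi' : (i : ℕ) ≠ a - 1 := fun h => hi (Fin.ext h)
    rw [Finset.sum_eq_zero]
    intro j _
    rw [if_neg (show ¬((i : ℕ) + 1 = a) by omega), zero_mul, ite_self]
  · intro h; exact absurd (Finset.mem_univ _) h

lemma nfE_extract {n : ℕ} (c1 c2 c3 c4 : ℂ) (i1 i2 i3 i4 : ℕ)
    (h : c1 • nfE n i1 = c2 • nfE n i2 + c3 • nfE n i3 + c4 • nfE n i4)
    (c : ℕ) (hc1 : 1 ≤ c) (hc2 : c ≤ n) :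
    (if c = i1 then c1 else 0) =
      (if c = i2 then c2 else 0) + (if c = i3 then c3 else 0) + (if c = i4 then c4 else 0) := by
  have H := congrFun h ⟨c - 1, by omega⟩
  simp only [Pi.add_apply, Pi.smul_apply, smul_eq_mul, nfE, Fin.val_mk,
    show c - 1 + 1 = c from by omega, mul_ite, mul_one, mul_zero] at H
  convert H using 2

lemma smul_nfE_eq_zero {n : ℕ} {c : ℂ} {i : ℕ} (h1 : 1 ≤ i) (h2 : i ≤ n)
    (h : c • nfE n i = 0) : c = 0 := by
  have H := congrFun h ⟨i - 1, by omega⟩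
  simp only [Pi.smul_apply, smul_eq_mul, nfE, Fin.val_mk, Pi.zero_apply,
    show i - 1 + 1 = i from by omega] at H
  simpa using H

/-- A homogeneous Rota–Baxter operator of weight `1` and degree `k` with `1 ≤ k < ⌊n/2⌋`
is zero. -/
theorem rota_baxter_weight1_small_degree (n k : ℕ) (hk1 : 1 ≤ k) (hk2 : k < n / 2)
    (ψ : ℕ → ℂ) (P : NF n →ₗ[ℂ] NF n)
    (hP : ∀ i, 1 ≤ i → i ≤ n →
      P (nfE n i) = ψ i • nfE n (if i + k ≤ n then i + k else i + k - n))
    (hRB : ∀ x y : NF n,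
      nfMul (P x) (P y) = P (nfMul x (P y) + nfMul (P x) y + nfMul x y)) :
    (∀ i, 1 ≤ i → i ≤ n → ψ i = 0) ∧ P = 0 := by
  have hn : 2 * k + 2 ≤ n := by omega
  have hP' : ∀ i, 1 ≤ i → i ≤ n → P (nfE n i) = ψ i • nfE n (nfSigma n k i) := hP
  have hσ : ∀ m, 1 ≤ m → m ≤ n → 1 ≤ nfSigma n k m ∧ nfSigma n k m ≤ n := by
    intro m h1 h2; unfold nfSigma; split <;> omega
  have hne : ∀ m, 1 ≤ m → nfSigma n k m ≠ m := by
    intro m h1; unfold nfSigma; split <;> omega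
  have hP'' : ∀ i, 1 ≤ i → P (nfE n i) = psiExt n ψ i • nfE n (nfSigma n k i) := by
    intro i h1
    by_cases h : i ≤ n
    · rw [hP' i h1 h]; unfold psiExt; rw [if_pos h]
    · rw [nfE_of_gt (by omega), map_zero]
      unfold psiExt; rw [if_neg h, zero_smul]
  have key : ∀ a b : ℕ, 1 ≤ a → a ≤ n → 1 ≤ b → b ≤ n →
      (ψ a * ψ b) • nfE n (nfSigma n k a + nfSigma n k b) =
        (ψ b * psiExt n ψ (a + nfSigma n k b)) • nfE n (nfSigma n k (a + nfSigma n k b)) +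
        (ψ a * psiExt n ψ (nfSigma n k a + b)) • nfE n (nfSigma n k (nfSigma n k a + b)) +
        psiExt n ψ (a + b) • nfE n (nfSigma n k (a + b)) := by
    intro a b ha1 ha hb1 hb
    obtain ⟨hsa1, hsa2⟩ := hσ a ha1 ha
    obtain ⟨hsb1, hsb2⟩ := hσ b hb1 hb
    have H := hRB (nfE n a) (nfE n b)
    rw [hP' a ha1 ha, hP' b hb1 hb] at H
    simp only [nfMul_smul_left, nfMul_smul_right] at H
    rw [nfMul_e _ _ hsa1 hsa2 hsb1 hsb2, nfMul_e _ _ ha1 ha hsb1 hsb2,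
      nfMul_e _ _ hsa1 hsa2 hb1 hb, nfMul_e _ _ ha1 ha hb1 hb] at H
    rw [map_add, map_add, map_smul, map_smul] at H
    rw [hP'' (a + nfSigma n k b) (by omega), hP'' (nfSigma n k a + b) (by omega),
      hP'' (a + b) (by omega)] at H
    simp only [smul_smul] at H
    rw [mul_comm (ψ b) (ψ a)] at H
    exact H
  have hψext : ∀ m, m ≤ n → psiExt n ψ m = ψ m := by
    intro m h; unfold psiExt; rw [if_pos h]
  -- Step A : ψ vanishes on [2, n-k]
  have hA : ∀ m, 2 ≤ m → m + k ≤ n → ψ m = 0 := by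
    intro m hm2 hmk
    have H := key 1 (m - 1) (by omega) (by omega) (by omega) (by omega)
    have s1 : nfSigma n k 1 = 1 + k := by unfold nfSigma; rw [if_pos (by omega)]
    have s2 : nfSigma n k (m - 1) = m - 1 + k := by unfold nfSigma; rw [if_pos (by omega)]
    rw [s1, s2, show 1 + (m - 1 + k) = m + k from by omega,
      show 1 + k + (m - 1) = m + k from by omega, show 1 + (m - 1) = m from by omega,
      show nfSigma n k m = m + k from by unfold nfSigma; rw [if_pos (by omega)],
      hψext m (by omega)] at H
    have hne1 := hne (m + k) (by omega)
    have E := nfE_extract _ _ _ _ _ _ _ _ H (m + k) (by omega) (by omega)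
    rw [if_neg (by omega), if_neg (by omega), if_neg (by omega), if_pos rfl] at E
    simpa using E.symm
  -- Step B : ψ 1 = 0
  have hB : ψ 1 = 0 := by
    have H := key 1 1 (by omega) (by omega) (by omega) (by omega)
    rw [show nfSigma n k 1 = 1 + k from by unfold nfSigma; rw [if_pos (by omega)]] at H
    rw [show psiExt n ψ (1 + (1 + k)) = 0 from by
        rw [hψext _ (by omega)]; exact hA _ (by omega) (by omega),
      show psiExt n ψ (1 + k + 1) = 0 from by
        rw [hψext _ (by omega)]; exact hA _ (by omega) (by omega),
      show psiExt n ψ (1 + 1) = 0 from by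
        rw [hψext _ (by omega)]; exact hA _ (by omega) (by omega),
      ] at H
    simp only [mul_zero, zero_smul, add_zero] at H
    exact mul_self_eq_zero.mp (smul_nfE_eq_zero (by omega) (by omega) H)
  -- Step C : ψ vanishes on [n-k+2, n]
  have hC : ∀ m, n - k + 2 ≤ m → m ≤ n → ψ m = 0 := by
    intro m hm1 hm2
    have H := key 1 (m - 1) (by omega) (by omega) (by omega) (by omega)
    rw [show nfSigma n k 1 = 1 + k from by unfold nfSigma; rw [if_pos (by omega)]] at H
    rw [show nfSigma n k (m - 1) = m - 1 + k - n from by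
        unfold nfSigma; rw [if_neg (by omega)]] at H
    rw [show psiExt n ψ (1 + (m - 1 + k - n)) = 0 from by
        rw [hψext _ (by omega)]; exact hA _ (by omega) (by omega)] at H
    rw [hB, zero_mul, zero_mul, zero_smul, zero_smul, mul_zero, zero_smul,
      zero_add, zero_add, show 1 + (m - 1) = m from by omega] at H
    have hs := hσ m (by omega) hm2
    have := smul_nfE_eq_zero hs.1 hs.2 H.symm
    rwa [hψext m hm2] at this
  -- Step D : ψ (n - k + 1) = 0
  have hD : ψ (n - k + 1) = 0 := by
    have H := key (n - k + 1) (n - k + 1) (by omega) (by omega) (by omega) (by omega)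
    rw [show nfSigma n k (n - k + 1) = 1 from by
        unfold nfSigma; rw [if_neg (by omega)]; omega] at H
    rw [show (1 : ℕ) + (n - k + 1) = n - k + 1 + 1 from by omega] at H
    rw [show psiExt n ψ (n - k + 1 + 1) = 0 from by
        unfold psiExt; split_ifs with h
        · exact hC _ (by omega) h
        · rfl] at H
    rw [show psiExt n ψ (n - k + 1 + (n - k + 1)) = 0 from by
        unfold psiExt; rw [if_neg (by omega)]] at H
    simp only [mul_zero, zero_smul, add_zero] at H
    exact mul_self_eq_zero.mp (smul_nfE_eq_zero (by omega) (by omega) H)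
  -- all ψ values vanish
  have hψ : ∀ i, 1 ≤ i → i ≤ n → ψ i = 0 := by
    intro i h1 h2
    by_cases hc1 : i = 1
    · rw [hc1]; exact hB
    by_cases hc2 : i + k ≤ n
    · exact hA i (by omega) hc2
    by_cases hc3 : i = n - k + 1
    · rw [hc3]; exact hD
    · exact hC i (by omega) h2
  refine ⟨hψ, ?_⟩
  apply LinearMap.ext
  intro x
  have hx : x = ∑ j : Fin n, x j • nfE n ((j : ℕ) + 1) := by
    funext m
    rw [Finset.sum_apply]
    rw [Finset.sum_eq_single m]
    · simp [nfE]
    · intro j _ hj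
      have hj' : (j : ℕ) ≠ (m : ℕ) := fun h => hj (Fin.ext h)
      simp only [Pi.smul_apply, smul_eq_mul, nfE]
      rw [if_neg (by omega), mul_zero]
    · intro h; exact absurd (Finset.mem_univ _) h
  rw [hx, map_sum, LinearMap.zero_apply]
  apply Finset.sum_eq_zero
  intro j _
  have hjn := j.isLt
  rw [map_smul, hP' ((j : ℕ) + 1) (by omega) (by omega),
    hψ ((j : ℕ) + 1) (by omega) (by omega), zero_smul, smul_zero]
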